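/- Let γ > 1 and let left/right states have u_{nL} = u_{nR} = 0, p_L = p_R = p > 0, arbitrary densities ρ_L, ρ_R > 0 and arbitrary tangential velocities u_{tL}, u_{tR}. Let S_L < 0 < S_R be the wave speeds and let ã > 0 be any interface sound speed. Using the Roe averages ρ̃ = √(ρ_L ρ_R), ũ_n = (√ρ_L u_{nL} + √ρ_R u_{nR})/(√ρ_L + √ρ_R) = 0 and ũ_t = (√ρ_L u_{tL} + √ρ_R u_{tR})/(√ρ_L + √ρ_R), the anti-diffusion coefficients δ₂ = δ₃ = ã/(ã + |ũ_n|) equal 1, and the HLLEM interface flux equals (0, p, 0, 0), the exact Euler flux of the stationary contact–shear discontinuity; i.e., the HLLEM scheme resolves stationary contact and shear discontinuities exactly. -/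

import Mathlib

/-- The HLLEM flux at an interface: HLL flux plus the anti-diffusion term
`B·ΔU = δ₂ α̃₂ R̃₂ + δ₃ α̃₃ R̃₃` built from Roe averages, with
`δ₂ = δ₃ = ã/(ã + |ũ_n|)`. -/
noncomputable def hllemFlux (γ SL SR atil ρL ρR pL pR unL unR utL utR : ℝ) :
    Fin 4 → ℝ :=
  let sL := Real.sqrt ρL
  let sR := Real.sqrt ρR
  let ρt := Real.sqrt (ρL * ρR)
  let unt := (sL * unL + sR * unR) / (sL + sR)
  let utt := (sL * utL + sR * utR) / (sL + sR)
  let δ := atil / (atil + |unt|)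
  let rEL := pL / (γ - 1) + ρL * (unL ^ 2 + utL ^ 2) / 2
  let rER := pR / (γ - 1) + ρR * (unR ^ 2 + utR ^ 2) / 2
  let UL : Fin 4 → ℝ := ![ρL, ρL * unL, ρL * utL, rEL]
  let UR : Fin 4 → ℝ := ![ρR, ρR * unR, ρR * utR, rER]
  let FL : Fin 4 → ℝ := ![ρL * unL, ρL * unL ^ 2 + pL, ρL * unL * utL, (rEL + pL) * unL]
  let FR : Fin 4 → ℝ := ![ρR * unR, ρR * unR ^ 2 + pR, ρR * unR * utR, (rER + pR) * unR]
  let α2 := (ρR - ρL) - (pR - pL) / atil ^ 2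
  let α3 := ρt * (utR - utL)
  let R2 : Fin 4 → ℝ := ![1, unt, utt, (unt ^ 2 + utt ^ 2) / 2]
  let R3 : Fin 4 → ℝ := ![0, 0, 1, utt]
  (SR - SL)⁻¹ • (SR • FL - SL • FR)
    + (SR * SL / (SR - SL)) • ((UR - UL) - ((δ * α2) • R2 + (δ * α3) • R3))

/-!
At a stationary contact both one-sided Euler fluxes equal `(0, p, 0, 0)`, so the HLL average
reproduces it. What remains is the HLL dissipation `ΔU - B·ΔU`. Since `ũ_n = 0`, `δ = 1`, and with
`Δp = 0` the contact and shear waves carry the whole jump: Roe's linearisation property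
`Δ(ρx) = x̃ Δρ + ρ̃ Δx`, together with its quadratic analogue for the kinetic energy, shows
`α̃₂ R̃₂ + α̃₃ R̃₃ = ΔU` exactly, so the dissipation vanishes.
-/

open Real

noncomputable def roeAverage (ρL ρR xL xR : ℝ) : ℝ :=
  (√ρL * xL + √ρR * xR) / (√ρL + √ρR)

noncomputable def conservedState (γ ρ p un ut : ℝ) : Fin 4 → ℝ :=
  ![ρ, ρ * un, ρ * ut, p / (γ - 1) + ρ * (un ^ 2 + ut ^ 2) / 2]

noncomputable def eulerFlux (γ ρ p un ut : ℝ) : Fin 4 → ℝ :=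
  let ρE := p / (γ - 1) + ρ * (un ^ 2 + ut ^ 2) / 2
  ![ρ * un, ρ * un ^ 2 + p, ρ * un * ut, (ρE + p) * un]

/-- The anti-diffusion term `B·ΔU = δ₂ α̃₂ R̃₂ + δ₃ α̃₃ R̃₃`. -/
noncomputable def hllemAntidiffusion (atil ρL ρR pL pR unL unR utL utR : ℝ) : Fin 4 → ℝ :=
  let unt := roeAverage ρL ρR unL unR
  let utt := roeAverage ρL ρR utL utR
  let δ := atil / (atil + |unt|)
  let α2 := (ρR - ρL) - (pR - pL) / atil ^ 2
  let α3 := √(ρL * ρR) * (utR - utL)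
  (δ * α2) • ![1, unt, utt, (unt ^ 2 + utt ^ 2) / 2] + (δ * α3) • ![0, 0, 1, utt]

theorem hllemFlux_eq (γ SL SR atil ρL ρR pL pR unL unR utL utR : ℝ) :
    hllemFlux γ SL SR atil ρL ρR pL pR unL unR utL utR =
      (SR - SL)⁻¹ • (SR • eulerFlux γ ρL pL unL utL - SL • eulerFlux γ ρR pR unR utR)
        + (SR * SL / (SR - SL)) • (conservedState γ ρR pR unR utR
          - conservedState γ ρL pL unL utL
          - hllemAntidiffusion atil ρL ρR pL pR unL unR utL utR) :=
  rfl

theorem hll_average_self {M : Type*} [AddCommGroup M] [Module ℝ M] {SL SR : ℝ} (h : SL ≠ SR)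
    (F : M) : (SR - SL)⁻¹ • (SR • F - SL • F) = F := by
  rw [← sub_smul, smul_smul, inv_mul_cancel₀ (sub_ne_zero.mpr h.symm), one_smul]

theorem eulerFlux_of_normal_velocity_zero (γ ρ p ut : ℝ) :
    eulerFlux γ ρ p 0 ut = ![0, p, 0, 0] := by
  simp [eulerFlux]

theorem roeAverage_zero_zero (ρL ρR : ℝ) : roeAverage ρL ρR 0 0 = 0 := by
  simp [roeAverage]

section RoeProperty

variable {ρL ρR : ℝ} (hρL : 0 ≤ ρL) (hρR : 0 ≤ ρR) (hρ : √ρL + √ρR ≠ 0)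
include hρL hρR hρ

theorem mul_sub_mul_eq_roeAverage (xL xR : ℝ) :
    ρR * xR - ρL * xL =
      (ρR - ρL) * roeAverage ρL ρR xL xR + √(ρL * ρR) * (xR - xL) := by
  obtain ⟨a, ha, rfl⟩ : ∃ a, 0 ≤ a ∧ ρL = a ^ 2 := ⟨√ρL, sqrt_nonneg _, (sq_sqrt hρL).symm⟩
  obtain ⟨b, hb, rfl⟩ : ∃ b, 0 ≤ b ∧ ρR = b ^ 2 := ⟨√ρR, sqrt_nonneg _, (sq_sqrt hρR).symm⟩
  rw [sqrt_sq ha, sqrt_sq hb] at hρ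
  simp only [roeAverage, sqrt_mul (sq_nonneg a), sqrt_sq ha, sqrt_sq hb]
  field_simp
  ring

theorem mul_sq_sub_mul_sq_eq_roeAverage (xL xR : ℝ) :
    ρR * xR ^ 2 / 2 - ρL * xL ^ 2 / 2 =
      (ρR - ρL) * (roeAverage ρL ρR xL xR ^ 2 / 2)
        + √(ρL * ρR) * (xR - xL) * roeAverage ρL ρR xL xR := by
  obtain ⟨a, ha, rfl⟩ : ∃ a, 0 ≤ a ∧ ρL = a ^ 2 := ⟨√ρL, sqrt_nonneg _, (sq_sqrt hρL).symm⟩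
  obtain ⟨b, hb, rfl⟩ : ∃ b, 0 ≤ b ∧ ρR = b ^ 2 := ⟨√ρR, sqrt_nonneg _, (sq_sqrt hρR).symm⟩
  rw [sqrt_sq ha, sqrt_sq hb] at hρ
  simp only [roeAverage, sqrt_mul (sq_nonneg a), sqrt_sq ha, sqrt_sq hb]
  field_simp
  ring

end RoeProperty

theorem hllemAntidiffusion_of_stationary_contact {atil ρL ρR : ℝ} (ha : atil ≠ 0)
    (hρL : 0 ≤ ρL) (hρR : 0 ≤ ρR) (hρ : √ρL + √ρR ≠ 0) (γ p utL utR : ℝ) :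
    hllemAntidiffusion atil ρL ρR p p 0 0 utL utR =
      conservedState γ ρR p 0 utR - conservedState γ ρL p 0 utL := by
  funext i
  fin_cases i <;>
    simp only [hllemAntidiffusion, conservedState, roeAverage_zero_zero, abs_zero, add_zero,
      div_self ha, sub_self, zero_div, sub_zero, one_mul, ne_eq, OfNat.ofNat_ne_zero,
      not_false_eq_true, zero_pow, zero_add, Matrix.smul_cons, smul_eq_mul, mul_one, mul_zero,
      Matrix.smul_empty, Matrix.add_cons, Matrix.head_cons, Matrix.tail_cons,
      Matrix.empty_add_empty, Fin.zero_eta, Fin.mk_one, Fin.reduceFinMk, Fin.isValue,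
      Matrix.cons_val_zero, Matrix.cons_val_one, Matrix.cons_val, Pi.sub_apply,
      add_sub_add_left_eq_sub]
  exacts [(mul_sub_mul_eq_roeAverage hρL hρR hρ utL utR).symm,
    (mul_sq_sub_mul_sq_eq_roeAverage hρL hρR hρ utL utR).symm]

theorem hllem_resolves_stationary_contact_shear_general
    (γ p ρL ρR utL utR SL SR atil : ℝ)
    (hρL : 0 < ρL) (hρR : 0 < ρR) (hSL : SL < 0) (hSR : 0 < SR) (ha : 0 < atil) :
    (atil / (atil +
        |(Real.sqrt ρL * 0 + Real.sqrt ρR * 0) / (Real.sqrt ρL + Real.sqrt ρR)|) = 1)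
    ∧ hllemFlux γ SL SR atil ρL ρR p p 0 0 utL utR = ![0, p, 0, 0] := by
  refine ⟨by simp [ha.ne'], ?_⟩
  rw [hllemFlux_eq,
    hllemAntidiffusion_of_stationary_contact ha.ne' hρL.le hρR.le (by positivity) γ,
    sub_self, smul_zero, add_zero, eulerFlux_of_normal_velocity_zero,
    eulerFlux_of_normal_velocity_zero, hll_average_self (hSL.trans hSR).ne]

/-- The HLLEM scheme resolves stationary contact and shear discontinuities
exactly: for `u_{nL} = u_{nR} = 0` and equal pressures, the Roe-averaged
normal velocity vanishes, so `δ₂ = δ₃ = ã/(ã + |ũ_n|) = 1`, and the interface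
flux is the exact Euler flux `(0, p, 0, 0)`. -/
theorem hllem_resolves_stationary_contact_shear
    (γ p ρL ρR utL utR SL SR atil : ℝ) (hγ : 1 < γ) (hp : 0 < p)
    (hρL : 0 < ρL) (hρR : 0 < ρR) (hSL : SL < 0) (hSR : 0 < SR) (ha : 0 < atil) :
    (atil / (atil +
        |(Real.sqrt ρL * 0 + Real.sqrt ρR * 0) / (Real.sqrt ρL + Real.sqrt ρR)|) = 1)
    ∧ hllemFlux γ SL SR atil ρL ρR p p 0 0 utL utR = ![0, p, 0, 0] :=
  hllem_resolves_stationary_contact_shear_general γ p ρL ρR utL utR SL SR atil hρL hρR hSL hSR ha
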